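/- Fix s2 ∈ (0,1]. The function s1 ↦ Π_P1(s1, s2) = 3·s2·(2·s1 − s2)·(1 − s1)/(s1 + s2)² attains its maximum on the interval [s2/2, min(2·s2, 1)] uniquely at s1 = (s2² + 4·s2)/(5·s2 + 2), and this point lies in the open interval (s2/2, min(2·s2, 1)). -/
import Mathlib


/-- Expected payoff of proposer 1 in the two-proposer–two-responder Ultimatum Game
when both responders play the evolutionarily stable strategy. -/
noncomputable def PiP1 (s1 s2 : ℝ) : ℝ :=
  3 * s2 * (2 * s1 - s2) * (1 - s1) / (s1 + s2)^2

theorem stmt6 (s2 : ℝ) (h0 : 0 < s2) (h1 : s2 ≤ 1)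
    (m : ℝ) (hm : m = (s2^2 + 4 * s2) / (5 * s2 + 2)) :
    m ∈ Set.Ioo (s2/2) (min (2*s2) 1) ∧
    ∀ x ∈ Set.Icc (s2/2) (min (2*s2) 1), x ≠ m → PiP1 x s2 < PiP1 m s2 := by
  have hd : (0:ℝ) < 5 * s2 + 2 := by linarith
  have hd' : (5 * s2 + 2 : ℝ) ≠ 0 := ne_of_gt hd
  have h1s : (0:ℝ) < s2 + 1 := by linarith
  constructor
  · constructor
    · rw [hm, lt_div_iff₀ hd]; nlinarith
    · apply lt_min
      · rw [hm, div_lt_iff₀ hd]; nlinarith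
      · rw [hm, div_lt_iff₀ hd]; nlinarith
  · intro x hx hne
    obtain ⟨hxl, hxr⟩ := hx
    have hxs : (0:ℝ) < x + s2 := by linarith
    have hPm : PiP1 m s2 = (2 - s2)^2 / (4 * (s2 + 1)) := by
      have hms : m + s2 ≠ 0 := by
        rw [hm]
        rw [div_add' _ _ _ hd']
        apply div_ne_zero _ hd'
        nlinarith
      unfold PiP1
      rw [hm] at hms ⊢
      field_simp
      ring
    have key : PiP1 m s2 - PiP1 x s2
        = ((2 - s2)^2 / (4 * (s2 + 1)) + 6 * s2) * (x - m)^2 / (x + s2)^2 := by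
      rw [hPm]
      unfold PiP1
      rw [hm]
      field_simp
      ring
    have hpos : 0 < ((2 - s2)^2 / (4 * (s2 + 1)) + 6 * s2) * (x - m)^2 / (x + s2)^2 := by
      have h2 : (0:ℝ) < (x - m)^2 := pow_two_pos_of_ne_zero (sub_ne_zero.mpr hne)
      have h3 : (0:ℝ) ≤ (2 - s2)^2 / (4 * (s2 + 1)) := by positivity
      have : (0:ℝ) < (2 - s2)^2 / (4 * (s2 + 1)) + 6 * s2 := by linarith
      positivity
    linarith [key, hpos]
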